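/- The three-dimensional curl diagram commutes (options 'red' and 'blue' coincide): for every continuously differentiable vector field F = (F₁, F₂, F₃) on [−1,1]³, one has p³(curl F) = curl(p² F), i.e. for each component n = 1, 2, 3, the mixed projection p³ₙ applied to (curl F)ₙ equals the n-th component of the curl of the componentwise mixed projection p²F. Here, for example, the first components are p³₁(g)(ξ,η,ζ) = ∑_{i=0}^N ∑_{j=1}^N ∑_{k=1}^N (∫_{ξ_{j−1}}^{ξ_j} ∫_{ξ_{k−1}}^{ξ_k} g(ξ_i, s, t) dt ds) l_i(ξ) h_j(η) h_k(ζ) and p²₁(F₁)(ξ,η,ζ) = ∑_{i=1}^N ∑_{j=0}^N ∑_{k=0}^N (∫_{ξ_{i−1}}^{ξ_i} F₁(s, ξ_j, ξ_k) ds) h_i(ξ) l_j(η) l_k(ζ), with the other components of p² and p³ defined by the analogous tensor products in which histopolation (edge basis h) is used in the directions indicated by the de Rham spaces V₂ and V₃ and interpolation (Lagrange basis l) in the remaining directions. -/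

import Mathlib

open Polynomial MeasureTheory

/-- Partial derivative (within the cube `[-1,1]³`, i.e. one-sided at the boundary) of
`f : ℝ³ → ℝ` in direction `d`. -/
noncomputable def pdOn (d : Fin 3) (f : (Fin 3 → ℝ) → ℝ) (y : Fin 3 → ℝ) : ℝ :=
  derivWithin (fun s => f (Function.update y d s)) (Set.Icc (-1 : ℝ) 1) (y d)

/-- Curl (on the cube) of a vector field `F : ℝ³ → ℝ³`:
`curl F = (∂₂F₃ - ∂₃F₂, ∂₃F₁ - ∂₁F₃, ∂₁F₂ - ∂₂F₁)`. -/
noncomputable def curlOn (F : (Fin 3 → ℝ) → (Fin 3 → ℝ)) (y : Fin 3 → ℝ) : Fin 3 → ℝ :=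
  ![pdOn 1 (fun z => F z 2) y - pdOn 2 (fun z => F z 1) y,
    pdOn 2 (fun z => F z 0) y - pdOn 0 (fun z => F z 2) y,
    pdOn 0 (fun z => F z 1) y - pdOn 1 (fun z => F z 0) y]

/-- The componentwise tensor-product projection `p²` (histopolation in direction 1 for
component 1, direction 2 for component 2, direction 3 for component 3; Lagrange
interpolation in the remaining directions). -/
noncomputable def P2 {N : ℕ} (ξ : Fin (N + 1) → ℝ) (l : Fin (N + 1) → Polynomial ℝ)
    (h : Fin N → Polynomial ℝ) (F : (Fin 3 → ℝ) → (Fin 3 → ℝ)) (y : Fin 3 → ℝ) :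
    Fin 3 → ℝ :=
  ![∑ i : Fin N, ∑ j : Fin (N + 1), ∑ k : Fin (N + 1),
      (∫ s in (ξ i.castSucc)..(ξ i.succ), F ![s, ξ j, ξ k] 0)
        * (h i).eval (y 0) * (l j).eval (y 1) * (l k).eval (y 2),
    ∑ i : Fin (N + 1), ∑ j : Fin N, ∑ k : Fin (N + 1),
      (∫ s in (ξ j.castSucc)..(ξ j.succ), F ![ξ i, s, ξ k] 1)
        * (l i).eval (y 0) * (h j).eval (y 1) * (l k).eval (y 2),
    ∑ i : Fin (N + 1), ∑ j : Fin (N + 1), ∑ k : Fin N,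
      (∫ s in (ξ k.castSucc)..(ξ k.succ), F ![ξ i, ξ j, s] 2)
        * (l i).eval (y 0) * (l j).eval (y 1) * (h k).eval (y 2)]

/-- The componentwise tensor-product projection `p³` (Lagrange interpolation in direction 1
for component 1, direction 2 for component 2, direction 3 for component 3; histopolation,
i.e. sub-interval integrals with the edge basis, in the remaining two directions). -/
noncomputable def P3 {N : ℕ} (ξ : Fin (N + 1) → ℝ) (l : Fin (N + 1) → Polynomial ℝ)
    (h : Fin N → Polynomial ℝ) (G : (Fin 3 → ℝ) → (Fin 3 → ℝ)) (y : Fin 3 → ℝ) :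
    Fin 3 → ℝ :=
  ![∑ i : Fin (N + 1), ∑ j : Fin N, ∑ k : Fin N,
      (∫ s in (ξ j.castSucc)..(ξ j.succ), ∫ t in (ξ k.castSucc)..(ξ k.succ), G ![ξ i, s, t] 0)
        * (l i).eval (y 0) * (h j).eval (y 1) * (h k).eval (y 2),
    ∑ i : Fin N, ∑ j : Fin (N + 1), ∑ k : Fin N,
      (∫ s in (ξ i.castSucc)..(ξ i.succ), ∫ t in (ξ k.castSucc)..(ξ k.succ), G ![s, ξ j, t] 1)
        * (h i).eval (y 0) * (l j).eval (y 1) * (h k).eval (y 2),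
    ∑ i : Fin N, ∑ j : Fin N, ∑ k : Fin (N + 1),
      (∫ s in (ξ i.castSucc)..(ξ i.succ), ∫ t in (ξ j.castSucc)..(ξ j.succ), G ![s, t, ξ k] 2)
        * (h i).eval (y 0) * (h j).eval (y 1) * (l k).eval (y 2)]

/-!
Every component of `p² F` and of `p³ (curl F)` is a tensor-product polynomial in the bases `l`
and `h`, so the identity is checked coefficient by coefficient. Differentiating a Lagrange
interpolant lands in the edge basis: since `∑ j, l j = 1`, summation by parts gives
`(∑ c_j l_j)' = ∑ (c_{j+1} - c_j) h_j`. Hence the coefficients of `curl (p² F)` are differences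
of edge integrals of `F`, i.e. circulations of `F` around the boundary of a face cell, and by
Green's theorem on that rectangle (FTC plus Fubini) they equal the cell integrals of `curl F`,
which are the coefficients of `p³ (curl F)`.
-/

open Set Function

theorem Fin.sum_univ_by_parts {R M : Type*} [Ring R] [AddCommGroup M] [Module R M] :
    ∀ {N : ℕ} (c : Fin (N + 1) → R) (g : Fin (N + 1) → M),
    ∑ j, c j • g j = c (Fin.last N) • ∑ j, g j -
      ∑ k : Fin N, (c k.succ - c k.castSucc) • ∑ j : Fin (N + 1), if (j : ℕ) < k + 1 then g j else 0
  | 0, c, g => by simp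
  | N + 1, c, g => by
    have ih := Fin.sum_univ_by_parts (fun j => c j.castSucc) (fun j => g j.castSucc)
    have hlast : ∀ k : Fin N, ¬ (N + 1 < (k : ℕ) + 1) := fun k => by omega
    rw [Fin.sum_univ_castSucc, ih, Fin.sum_univ_castSucc (fun k : Fin (N + 1) => _ • _),
      Fin.sum_univ_castSucc g]
    simp only [Fin.sum_univ_castSucc (fun j : Fin (N + 2) => ite _ _ _), Fin.val_castSucc,
      Fin.val_last, Fin.succ_castSucc, Fin.succ_last, lt_irrefl, if_false, add_zero, hlast,
      Fin.is_lt, if_true]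
    simp only [sub_smul, smul_add]
    abel

section EdgeBasis

variable {N : ℕ} {ξ : Fin (N + 1) → ℝ} {l : Fin (N + 1) → ℝ[X]} {h : Fin N → ℝ[X]}

theorem sum_eq_one_of_eval_eq_ite (hξ : Injective ξ) (hdeg : ∀ i, (l i).natDegree ≤ N)
    (hlag : ∀ i j, (l i).eval (ξ j) = if i = j then 1 else 0) :
    ∑ j, l j = 1 := by
  refine eq_of_degrees_lt_of_eval_index_eq (s := Finset.univ) (v := ξ) hξ.injOn ?_ ?_ ?_
  · refine (degree_le_of_natDegree_le
      (natDegree_sum_le_of_forall_le _ _ fun i _ => hdeg i)).trans_lt ?_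
    simp only [Finset.card_univ, Fintype.card_fin]
    exact_mod_cast N.lt_succ_self
  · rw [degree_one, Finset.card_univ, Fintype.card_fin]
    exact_mod_cast N.succ_pos
  · intro i _
    simp [eval_finsetSum, hlag]

theorem sum_derivative_eq_zero_of_eval_eq_ite (hξ : Injective ξ) (hdeg : ∀ i, (l i).natDegree ≤ N)
    (hlag : ∀ i j, (l i).eval (ξ j) = if i = j then 1 else 0) :
    ∑ j, derivative (l j) = 0 := by
  rw [← derivative_sum, sum_eq_one_of_eval_eq_ite hξ hdeg hlag, derivative_one]

variable (hl : ∑ j, derivative (l j) = 0)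
    (hdef : ∀ i : Fin N,
      h i = -∑ j : Fin (N + 1), if (j : ℕ) < (i : ℕ) + 1 then derivative (l j) else 0)
include hl hdef

theorem derivative_sum_smul_eq_sum_sub_smul (c : Fin (N + 1) → ℝ) :
    derivative (∑ j, c j • l j) = ∑ k, (c k.succ - c k.castSucc) • h k := by
  simp only [derivative_sum, derivative_smul, hdef, smul_neg, Finset.sum_neg_distrib]
  rw [Fin.sum_univ_by_parts, hl, smul_zero, zero_sub]

theorem sum_mul_eval_derivative (c : Fin (N + 1) → ℝ) (x : ℝ) :
    ∑ j, c j * (derivative (l j)).eval x = ∑ k, (c k.succ - c k.castSucc) * (h k).eval x := by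
  simpa [eval_finsetSum] using
    congrArg (Polynomial.eval x) (derivative_sum_smul_eq_sum_sub_smul hl hdef c)

end EdgeBasis

section Cube

theorem pdOn_eq_of_hasDerivWithinAt {d : Fin 3} {f : (Fin 3 → ℝ) → ℝ} {y : Fin 3 → ℝ} {f' : ℝ}
    (hy : y d ∈ Icc (-1 : ℝ) 1)
    (hf : HasDerivWithinAt (fun s => f (update y d s)) f' (Icc (-1) 1) (y d)) :
    pdOn d f y = f' :=
  hf.derivWithin (uniqueDiffOn_Icc (by norm_num) _ hy)

theorem update_mem_cube {y : Fin 3 → ℝ} (hy : y ∈ Icc (-1 : Fin 3 → ℝ) 1) (d : Fin 3) {s : ℝ}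
    (hs : s ∈ Icc (-1 : ℝ) 1) : update y d s ∈ Icc (-1 : Fin 3 → ℝ) 1 := by
  rw [← pi_univ_Icc] at hy ⊢
  exact (update_mem_pi_iff_of_mem hy).2 fun _ => hs

theorem vecCons_mem_cube {a b c : ℝ} (ha : a ∈ Icc (-1 : ℝ) 1) (hb : b ∈ Icc (-1 : ℝ) 1)
    (hc : c ∈ Icc (-1 : ℝ) 1) : ![a, b, c] ∈ Icc (-1 : Fin 3 → ℝ) 1 := by
  rw [← pi_univ_Icc]
  intro i _
  fin_cases i <;> assumption

theorem pdOn_update (d : Fin 3) (f : (Fin 3 → ℝ) → ℝ) (y : Fin 3 → ℝ) (s : ℝ) :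
    pdOn d f (update y d s) = derivWithin (fun t => f (update y d t)) (Icc (-1) 1) s := by
  simp [pdOn]

variable {f : (Fin 3 → ℝ) → ℝ} (hf : ContDiffOn ℝ 1 f (Icc (-1 : Fin 3 → ℝ) 1))
include hf

theorem integral_pdOn_update (d : Fin 3) {y : Fin 3 → ℝ} (hy : y ∈ Icc (-1 : Fin 3 → ℝ) 1)
    {a b : ℝ} (ha : a ∈ Icc (-1 : ℝ) 1) (hb : b ∈ Icc (-1 : ℝ) 1) :
    ∫ s in a..b, pdOn d f (update y d s) = f (update y d b) - f (update y d a) := by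
  have hg : ContDiffOn ℝ 1 (fun s => f (update y d s)) (Icc (-1) 1) :=
    hf.comp (contDiff_update 1 y d).contDiffOn fun s hs => update_mem_cube hy d hs
  have hab : uIcc a b ⊆ Icc (-1) 1 := uIcc_subset_Icc ha hb
  simp only [pdOn_update]
  refine intervalIntegral.integral_eq_sub_of_hasDeriv_right (hg.continuousOn.mono hab)
    (fun x hx => ?_) ?_
  · have hx' : x ∈ Ioo (-1 : ℝ) 1 :=
      ⟨(le_min ha.1 hb.1).trans_lt hx.1, hx.2.trans_le (max_le ha.2 hb.2)⟩
    exact ((hg.differentiableOn one_ne_zero x (Ioo_subset_Icc_self hx')).hasDerivWithinAt.hasDerivAt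
      (Icc_mem_nhds hx'.1 hx'.2)).hasDerivWithinAt
  · exact ((hg.continuousOn_derivWithin (uniqueDiffOn_Icc (by norm_num)) le_rfl).mono
      hab).intervalIntegrable

theorem pdOn_eq_fderivWithin (d : Fin 3) {z : Fin 3 → ℝ} (hz : z ∈ Icc (-1 : Fin 3 → ℝ) 1) :
    pdOn d f z = fderivWithin ℝ f (Icc (-1) 1) z (Pi.single d 1) := by
  refine pdOn_eq_of_hasDerivWithinAt ⟨hz.1 d, hz.2 d⟩ ?_
  have hf' : HasFDerivWithinAt f (fderivWithin ℝ f (Icc (-1) 1) z) (Icc (-1) 1)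
      (update z d (z d)) := by
    rw [update_eq_self]
    exact (hf.differentiableOn one_ne_zero z hz).hasFDerivWithinAt
  exact hf'.comp_hasDerivWithinAt (z d) (hasDerivAt_update z d (z d)).hasDerivWithinAt
    fun s hs => update_mem_cube hz d hs

theorem continuousOn_pdOn (d : Fin 3) : ContinuousOn (pdOn d f) (Icc (-1 : Fin 3 → ℝ) 1) := by
  have hcube : UniqueDiffOn ℝ (Icc (-1 : Fin 3 → ℝ) 1) := by
    rw [← pi_univ_Icc]
    exact UniqueDiffOn.univ_pi fun _ => uniqueDiffOn_Icc (by norm_num)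
  refine ContinuousOn.congr ?_ fun z hz => pdOn_eq_fderivWithin hf d hz
  exact (hf.continuousOn_fderivWithin hcube le_rfl).clm_apply continuousOn_const

end Cube

section TensorProduct

variable {ι κ μ : Type*} [Fintype ι] [Fintype κ] [Fintype μ]

/-- Every component of `P2` and `P3` is definitionally of this form. -/
noncomputable def tensorEval (c : ι → κ → μ → ℝ) (p : ι → ℝ[X]) (q : κ → ℝ[X]) (r : μ → ℝ[X])
    (y : Fin 3 → ℝ) : ℝ :=
  ∑ i, ∑ j, ∑ k, c i j k * (p i).eval (y 0) * (q j).eval (y 1) * (r k).eval (y 2)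

theorem tensorEval_sub (c c' : ι → κ → μ → ℝ) (p : ι → ℝ[X]) (q : κ → ℝ[X]) (r : μ → ℝ[X])
    (y : Fin 3 → ℝ) :
    tensorEval (fun i j k => c i j k - c' i j k) p q r y =
      tensorEval c p q r y - tensorEval c' p q r y := by
  simp only [tensorEval, ← Finset.sum_sub_distrib, sub_mul]

theorem pdOn_tensorEval_zero (c : ι → κ → μ → ℝ) (p : ι → ℝ[X]) (q : κ → ℝ[X]) (r : μ → ℝ[X])
    {y : Fin 3 → ℝ} (hy : y 0 ∈ Icc (-1 : ℝ) 1) :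
    pdOn 0 (tensorEval c p q r) y = tensorEval c (fun i => derivative (p i)) q r y := by
  refine pdOn_eq_of_hasDerivWithinAt hy (HasDerivAt.hasDerivWithinAt ?_)
  simp only [tensorEval, update_self, ne_eq, Fin.reduceEq, not_false_eq_true, update_of_ne]
  exact HasDerivAt.fun_sum fun i _ => HasDerivAt.fun_sum fun j _ => HasDerivAt.fun_sum fun k _ =>
    ((((p i).hasDerivAt _).const_mul _).mul_const _).mul_const _

theorem pdOn_tensorEval_one (c : ι → κ → μ → ℝ) (p : ι → ℝ[X]) (q : κ → ℝ[X]) (r : μ → ℝ[X])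
    {y : Fin 3 → ℝ} (hy : y 1 ∈ Icc (-1 : ℝ) 1) :
    pdOn 1 (tensorEval c p q r) y = tensorEval c p (fun j => derivative (q j)) r y := by
  refine pdOn_eq_of_hasDerivWithinAt hy (HasDerivAt.hasDerivWithinAt ?_)
  simp only [tensorEval, update_self, ne_eq, Fin.reduceEq, not_false_eq_true, update_of_ne]
  exact HasDerivAt.fun_sum fun i _ => HasDerivAt.fun_sum fun j _ => HasDerivAt.fun_sum fun k _ =>
    (((q j).hasDerivAt _).const_mul _).mul_const _

theorem pdOn_tensorEval_two (c : ι → κ → μ → ℝ) (p : ι → ℝ[X]) (q : κ → ℝ[X]) (r : μ → ℝ[X])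
    {y : Fin 3 → ℝ} (hy : y 2 ∈ Icc (-1 : ℝ) 1) :
    pdOn 2 (tensorEval c p q r) y = tensorEval c p q (fun k => derivative (r k)) y := by
  refine pdOn_eq_of_hasDerivWithinAt hy (HasDerivAt.hasDerivWithinAt ?_)
  simp only [tensorEval, update_self, ne_eq, Fin.reduceEq, not_false_eq_true, update_of_ne]
  exact HasDerivAt.fun_sum fun i _ => HasDerivAt.fun_sum fun j _ => HasDerivAt.fun_sum fun k _ =>
    ((r k).hasDerivAt _).const_mul _

variable {N : ℕ} {l : Fin (N + 1) → ℝ[X]} {h : Fin N → ℝ[X]}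
    (hl : ∑ j, derivative (l j) = 0)
    (hdef : ∀ i : Fin N,
      h i = -∑ j : Fin (N + 1), if (j : ℕ) < (i : ℕ) + 1 then derivative (l j) else 0)
include hl hdef

theorem tensorEval_derivative_zero (c : Fin (N + 1) → κ → μ → ℝ) (q : κ → ℝ[X]) (r : μ → ℝ[X])
    (y : Fin 3 → ℝ) :
    tensorEval c (fun i => derivative (l i)) q r y =
      tensorEval (fun i j k => c i.succ j k - c i.castSucc j k) h q r y := by
  have := sum_mul_eval_derivative hl hdef
    (fun i => ∑ j, ∑ k, c i j k * (q j).eval (y 1) * (r k).eval (y 2)) (y 0)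
  simp only [tensorEval, Finset.sum_mul, ← Finset.sum_sub_distrib, sub_mul] at this ⊢
  convert this using 4 <;> ring

theorem tensorEval_derivative_one (c : ι → Fin (N + 1) → μ → ℝ) (p : ι → ℝ[X]) (r : μ → ℝ[X])
    (y : Fin 3 → ℝ) :
    tensorEval c p (fun j => derivative (l j)) r y =
      tensorEval (fun i j k => c i j.succ k - c i j.castSucc k) p h r y := by
  refine Finset.sum_congr rfl fun i _ => ?_
  have := sum_mul_eval_derivative hl hdef
    (fun j => ∑ k, c i j k * (p i).eval (y 0) * (r k).eval (y 2)) (y 1)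
  simp only [Finset.sum_mul, ← Finset.sum_sub_distrib, sub_mul] at this ⊢
  convert this using 3 <;> ring

theorem tensorEval_derivative_two (c : ι → κ → Fin (N + 1) → ℝ) (p : ι → ℝ[X]) (q : κ → ℝ[X])
    (y : Fin 3 → ℝ) :
    tensorEval c p q (fun k => derivative (l k)) y =
      tensorEval (fun i j k => c i j k.succ - c i j k.castSucc) p q h y := by
  refine Finset.sum_congr rfl fun i _ => Finset.sum_congr rfl fun j _ => ?_
  simpa only [sub_mul] using sum_mul_eval_derivative hl hdef
    (fun k => c i j k * (p i).eval (y 0) * (q j).eval (y 1)) (y 2)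

end TensorProduct

section Rectangle

variable {u v : ℝ → ℝ → ℝ} {a b c d : ℝ}

theorem integrableOn_uIoc_prod_of_continuousOn
    (hu : ContinuousOn (uncurry u) (uIcc a b ×ˢ uIcc c d)) :
    IntegrableOn (uncurry u) (uIoc a b ×ˢ uIoc c d) :=
  (hu.integrableOn_compact (isCompact_uIcc.prod isCompact_uIcc)).mono_set
    (prod_mono uIoc_subset_uIcc uIoc_subset_uIcc)

theorem integral_integral_sub_of_continuousOn (hab : a ≤ b) (hcd : c ≤ d)
    (hu : ContinuousOn (uncurry u) (uIcc a b ×ˢ uIcc c d))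
    (hv : ContinuousOn (uncurry v) (uIcc a b ×ˢ uIcc c d)) :
    ∫ s in a..b, ∫ t in c..d, (u s t - v s t) =
      (∫ s in a..b, ∫ t in c..d, u s t) - ∫ s in a..b, ∫ t in c..d, v s t := by
  have hu' := integrableOn_uIoc_prod_of_continuousOn hu
  have hv' := integrableOn_uIoc_prod_of_continuousOn hv
  rw [uIoc_of_le hab, uIoc_of_le hcd, IntegrableOn, Measure.volume_eq_prod,
    ← Measure.prod_restrict] at hu' hv'
  simp only [intervalIntegral.integral_of_le hab, intervalIntegral.integral_of_le hcd]
  exact integral_integral_sub hu' hv'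

end Rectangle

section Green

def coordPlane (y : Fin 3 → ℝ) (p q : Fin 3) (s t : ℝ) : Fin 3 → ℝ :=
  update (update y p s) q t

variable {y : Fin 3 → ℝ} {p q : Fin 3}

theorem coordPlane_comm (hpq : p ≠ q) (s t : ℝ) : coordPlane y p q s t = coordPlane y q p t s := by
  simp only [coordPlane, update_comm hpq s t y]

theorem coordPlane_mem_cube (hy : y ∈ Icc (-1 : Fin 3 → ℝ) 1) {s t : ℝ}
    (hs : s ∈ Icc (-1 : ℝ) 1) (ht : t ∈ Icc (-1 : ℝ) 1) :
    coordPlane y p q s t ∈ Icc (-1 : Fin 3 → ℝ) 1 :=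
  update_mem_cube (update_mem_cube hy p hs) q ht

theorem ContinuousOn.comp_coordPlane {g : (Fin 3 → ℝ) → ℝ}
    (hg : ContinuousOn g (Icc (-1 : Fin 3 → ℝ) 1)) (hy : y ∈ Icc (-1 : Fin 3 → ℝ) 1) :
    ContinuousOn (uncurry fun s t => g (coordPlane y p q s t)) (Icc (-1) 1 ×ˢ Icc (-1) 1) :=
  hg.comp (by unfold coordPlane; fun_prop) fun x hx => coordPlane_mem_cube hy hx.1 hx.2

variable {f : (Fin 3 → ℝ) → ℝ} (hf : ContDiffOn ℝ 1 f (Icc (-1 : Fin 3 → ℝ) 1))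
    (hy : y ∈ Icc (-1 : Fin 3 → ℝ) 1) {a b c d : ℝ} (ha : a ∈ Icc (-1 : ℝ) 1)
    (hb : b ∈ Icc (-1 : ℝ) 1) (hc : c ∈ Icc (-1 : ℝ) 1) (hd : d ∈ Icc (-1 : ℝ) 1)
include hf hy ha hb hc hd

theorem integral_integral_pdOn_coordPlane_snd :
    ∫ s in a..b, ∫ t in c..d, pdOn q f (coordPlane y p q s t) =
      (∫ s in a..b, f (coordPlane y p q s d)) - ∫ s in a..b, f (coordPlane y p q s c) := by
  have hab := uIcc_subset_Icc ha hb
  rw [intervalIntegral.integral_congr (f := fun s => ∫ t in c..d, pdOn q f (coordPlane y p q s t))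
    (g := fun s => f (coordPlane y p q s d) - f (coordPlane y p q s c))
    fun s hs => integral_pdOn_update hf q (update_mem_cube hy p (hab hs)) hc hd]
  have hline : ∀ e ∈ Icc (-1 : ℝ) 1,
      IntervalIntegrable (fun s => f (coordPlane y p q s e)) volume a b :=
    fun e he => ContinuousOn.intervalIntegrable <|
      (hf.continuousOn.comp_coordPlane hy).comp (continuous_id.prodMk continuous_const).continuousOn
        fun s hs => ⟨hab hs, he⟩
  exact intervalIntegral.integral_sub (hline d hd) (hline c hc)

theorem integral_integral_pdOn_coordPlane_fst (hpq : p ≠ q) :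
    ∫ s in a..b, ∫ t in c..d, pdOn p f (coordPlane y p q s t) =
      (∫ t in c..d, f (coordPlane y p q b t)) - ∫ t in c..d, f (coordPlane y p q a t) := by
  rw [intervalIntegral_intervalIntegral_swap (integrableOn_uIoc_prod_of_continuousOn
    (((continuousOn_pdOn hf p).comp_coordPlane hy).mono
      (prod_mono (uIcc_subset_Icc ha hb) (uIcc_subset_Icc hc hd))))]
  simpa only [coordPlane_comm hpq] using integral_integral_pdOn_coordPlane_snd hf hy hc hd ha hb

theorem integral_integral_pdOn_sub_pdOn_coordPlane {g : (Fin 3 → ℝ) → ℝ}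
    (hg : ContDiffOn ℝ 1 g (Icc (-1 : Fin 3 → ℝ) 1)) (hpq : p ≠ q) (hab : a ≤ b) (hcd : c ≤ d) :
    ∫ s in a..b, ∫ t in c..d, (pdOn p f (coordPlane y p q s t) - pdOn q g (coordPlane y p q s t)) =
      ((∫ t in c..d, f (coordPlane y p q b t)) - ∫ t in c..d, f (coordPlane y p q a t)) -
        ((∫ s in a..b, g (coordPlane y p q s d)) - ∫ s in a..b, g (coordPlane y p q s c)) := by
  have hrect := prod_mono (uIcc_subset_Icc ha hb) (uIcc_subset_Icc hc hd)
  rw [integral_integral_sub_of_continuousOn hab hcd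
      (((continuousOn_pdOn hf p).comp_coordPlane hy).mono hrect)
      (((continuousOn_pdOn hg q).comp_coordPlane hy).mono hrect),
    integral_integral_pdOn_coordPlane_fst hf hy ha hb hc hd hpq,
    integral_integral_pdOn_coordPlane_snd hg hy ha hb hc hd]

end Green

section Curl

theorem curlOn_apply_zero (F : (Fin 3 → ℝ) → (Fin 3 → ℝ)) (y : Fin 3 → ℝ) :
    curlOn F y 0 = pdOn 1 (fun z => F z 2) y - pdOn 2 (fun z => F z 1) y := rfl

theorem curlOn_apply_one (F : (Fin 3 → ℝ) → (Fin 3 → ℝ)) (y : Fin 3 → ℝ) :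
    curlOn F y 1 = pdOn 2 (fun z => F z 0) y - pdOn 0 (fun z => F z 2) y := rfl

theorem curlOn_apply_two (F : (Fin 3 → ℝ) → (Fin 3 → ℝ)) (y : Fin 3 → ℝ) :
    curlOn F y 2 = pdOn 0 (fun z => F z 1) y - pdOn 1 (fun z => F z 0) y := rfl

variable {F : (Fin 3 → ℝ) → (Fin 3 → ℝ)} (hF : ContDiffOn ℝ 1 F (Icc (-1 : Fin 3 → ℝ) 1))
    {x a b c d : ℝ} (hx : x ∈ Icc (-1 : ℝ) 1) (ha : a ∈ Icc (-1 : ℝ) 1)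
    (hb : b ∈ Icc (-1 : ℝ) 1) (hc : c ∈ Icc (-1 : ℝ) 1) (hd : d ∈ Icc (-1 : ℝ) 1)
    (hab : a ≤ b) (hcd : c ≤ d)
include hF hx ha hb hc hd hab hcd

theorem integral_integral_curlOn_zero :
    ∫ s in a..b, ∫ t in c..d, curlOn F ![x, s, t] 0 =
      ((∫ t in c..d, F ![x, b, t] 2) - ∫ t in c..d, F ![x, a, t] 2) -
        ((∫ s in a..b, F ![x, s, d] 1) - ∫ s in a..b, F ![x, s, c] 1) := by
  have hπ : ∀ s t, coordPlane ![x, x, x] 1 2 s t = ![x, s, t] := fun s t => by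
    funext i; fin_cases i <;> rfl
  simpa only [hπ, curlOn_apply_zero] using
    integral_integral_pdOn_sub_pdOn_coordPlane (p := 1) (q := 2) (contDiffOn_pi.1 hF 2)
      (vecCons_mem_cube hx hx hx) ha hb hc hd (contDiffOn_pi.1 hF 1) (by decide) hab hcd

theorem integral_integral_curlOn_one :
    ∫ s in a..b, ∫ t in c..d, curlOn F ![s, x, t] 1 =
      ((∫ s in a..b, F ![s, x, d] 0) - ∫ s in a..b, F ![s, x, c] 0) -
        ((∫ t in c..d, F ![b, x, t] 2) - ∫ t in c..d, F ![a, x, t] 2) := by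
  have hπ : ∀ s t, coordPlane ![x, x, x] 0 2 s t = ![s, x, t] := fun s t => by
    funext i; fin_cases i <;> rfl
  have hgreen :=
    integral_integral_pdOn_sub_pdOn_coordPlane (p := 0) (q := 2) (contDiffOn_pi.1 hF 2)
      (vecCons_mem_cube hx hx hx) ha hb hc hd (contDiffOn_pi.1 hF 0) (by decide) hab hcd
  simp only [hπ] at hgreen
  simp only [curlOn_apply_one, ← neg_sub (pdOn 0 _ _), intervalIntegral.integral_neg, hgreen]
  ring

theorem integral_integral_curlOn_two :
    ∫ s in a..b, ∫ t in c..d, curlOn F ![s, t, x] 2 =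
      ((∫ t in c..d, F ![b, t, x] 1) - ∫ t in c..d, F ![a, t, x] 1) -
        ((∫ s in a..b, F ![s, d, x] 0) - ∫ s in a..b, F ![s, c, x] 0) := by
  have hπ : ∀ s t, coordPlane ![x, x, x] 0 1 s t = ![s, t, x] := fun s t => by
    funext i; fin_cases i <;> rfl
  simpa only [hπ, curlOn_apply_two] using
    integral_integral_pdOn_sub_pdOn_coordPlane (p := 0) (q := 1) (contDiffOn_pi.1 hF 1)
      (vecCons_mem_cube hx hx hx) ha hb hc hd (contDiffOn_pi.1 hF 0) (by decide) hab hcd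

end Curl

section Projections

variable {N : ℕ} {ξ : Fin (N + 1) → ℝ} {l : Fin (N + 1) → ℝ[X]} {h : Fin N → ℝ[X]}
    (hl : ∑ j, derivative (l j) = 0)
    (hdef : ∀ i : Fin N,
      h i = -∑ j : Fin (N + 1), if (j : ℕ) < (i : ℕ) + 1 then derivative (l j) else 0)
    {F : (Fin 3 → ℝ) → (Fin 3 → ℝ)} (hF : ContDiffOn ℝ 1 F (Icc (-1 : Fin 3 → ℝ) 1))
    (hξ : ∀ i, ξ i ∈ Icc (-1 : ℝ) 1) (hcell : ∀ k : Fin N, ξ k.castSucc ≤ ξ k.succ)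
    {y : Fin 3 → ℝ} (hy : y ∈ Icc (-1 : Fin 3 → ℝ) 1)
include hl hdef hF hξ hcell hy

theorem P3_curlOn_apply_zero : P3 ξ l h (curlOn F) y 0 = curlOn (P2 ξ l h F) y 0 := by
  show tensorEval _ l h h y = pdOn 1 (tensorEval _ l l h) y - pdOn 2 (tensorEval _ l h l) y
  rw [pdOn_tensorEval_one _ _ _ _ ⟨hy.1 1, hy.2 1⟩, pdOn_tensorEval_two _ _ _ _ ⟨hy.1 2, hy.2 2⟩,
    tensorEval_derivative_one hl hdef, tensorEval_derivative_two hl hdef, ← tensorEval_sub]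
  congr
  funext i j k
  exact integral_integral_curlOn_zero hF (hξ i) (hξ _) (hξ _) (hξ _) (hξ _) (hcell j) (hcell k)

theorem P3_curlOn_apply_one : P3 ξ l h (curlOn F) y 1 = curlOn (P2 ξ l h F) y 1 := by
  show tensorEval _ h l h y = pdOn 2 (tensorEval _ h l l) y - pdOn 0 (tensorEval _ l l h) y
  rw [pdOn_tensorEval_two _ _ _ _ ⟨hy.1 2, hy.2 2⟩, pdOn_tensorEval_zero _ _ _ _ ⟨hy.1 0, hy.2 0⟩,
    tensorEval_derivative_two hl hdef, tensorEval_derivative_zero hl hdef, ← tensorEval_sub]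
  congr
  funext i j k
  exact integral_integral_curlOn_one hF (hξ j) (hξ _) (hξ _) (hξ _) (hξ _) (hcell i) (hcell k)

theorem P3_curlOn_apply_two : P3 ξ l h (curlOn F) y 2 = curlOn (P2 ξ l h F) y 2 := by
  show tensorEval _ h h l y = pdOn 0 (tensorEval _ l h l) y - pdOn 1 (tensorEval _ h l l) y
  rw [pdOn_tensorEval_zero _ _ _ _ ⟨hy.1 0, hy.2 0⟩, pdOn_tensorEval_one _ _ _ _ ⟨hy.1 1, hy.2 1⟩,
    tensorEval_derivative_zero hl hdef, tensorEval_derivative_one hl hdef, ← tensorEval_sub]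
  congr
  funext i j k
  exact integral_integral_curlOn_two hF (hξ k) (hξ _) (hξ _) (hξ _) (hξ _) (hcell i) (hcell j)

end Projections

theorem p3_curl_eq_curl_p2
    (N : ℕ) (ξ : Fin (N + 1) → ℝ)
    (hmono : StrictMono ξ) (hfirst : ξ 0 = -1) (hlast : ξ (Fin.last N) = 1)
    (l : Fin (N + 1) → Polynomial ℝ)
    (hdeg : ∀ i, (l i).natDegree ≤ N)
    (hlag : ∀ i j, (l i).eval (ξ j) = if i = j then 1 else 0)
    (h : Fin N → Polynomial ℝ)
    (hdef : ∀ i : Fin N,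
      h i = -∑ j : Fin (N + 1), if (j : ℕ) < (i : ℕ) + 1 then derivative (l j) else 0)
    (F : (Fin 3 → ℝ) → (Fin 3 → ℝ))
    (hF : ContDiffOn ℝ 1 F (Set.Icc (-1 : Fin 3 → ℝ) 1)) :
    ∀ y ∈ Set.Icc (-1 : Fin 3 → ℝ) 1,
      P3 ξ l h (curlOn F) y = curlOn (fun z => P2 ξ l h F z) y := by
  intro y hy
  have hl := sum_derivative_eq_zero_of_eval_eq_ite hmono.injective hdeg hlag
  have hξ : ∀ i, ξ i ∈ Icc (-1 : ℝ) 1 := fun i =>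
    ⟨hfirst ▸ hmono.monotone (Fin.zero_le i), hlast ▸ hmono.monotone (Fin.le_last i)⟩
  have hcell : ∀ k : Fin N, ξ k.castSucc ≤ ξ k.succ := fun k => (hmono k.castSucc_lt_succ).le
  funext n
  fin_cases n
  · exact P3_curlOn_apply_zero hl hdef hF hξ hcell hy
  · exact P3_curlOn_apply_one hl hdef hF hξ hcell hy
  · exact P3_curlOn_apply_two hl hdef hF hξ hcell hy
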